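/- For every a ∈ ℕ there exist polynomials P_{a,ℓ,m,n} ∈ ℚ[x], indexed by integers ℓ ≥ 0, n ≥ a(a+1)/2 and n²/a ≤ m ≤ n², each of degree at most ℓ, such that for all k ∈ ℤ, r, s ∈ ℕ and N ∈ ℕ₀, d_{a,k,r,s}(N) = Σ P_{a,ℓ,m,n}(k), the sum running over all triples (ℓ, m, n) with ℓ ≥ 0, n ≥ a(a+1)/2, n²/a ≤ m ≤ n² and mr + ns + ℓ = N. -/

import Mathlib

/-!
The binomial series gives `(1 - q^n)^(-k) = ∑ᵢ multichoose(k, i) q^(n i)` for every `k : ℤ`, and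
`multichoose(k, i) = k (k + 1) ⋯ (k + i - 1) / i!` is a polynomial in `k` of degree `i ≤ n i`.
Coefficients of products multiply as polynomials, so the coefficient of `q^ℓ` in
`∏ⱼ (1 - q^(nⱼ))^(-k)` is a polynomial in `k` of degree at most `ℓ`. Grouping the tuples
`n₁ < ⋯ < n_a` by `m = ∑ nⱼ²`, `n = ∑ nⱼ` and `ℓ = N - r m - s n` gives `P_{a,ℓ,m,n}` as the sum of
these polynomials over the tuples of shape `(m, n)`; such shapes satisfy `n ≥ 1 + 2 + ⋯ + a` and,
by Cauchy–Schwarz, `n² ≤ a m ≤ a n²`.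
-/

open PowerSeries Finset
open scoped Classical

noncomputable section

/-- `(1 - q^n)^(-k)` in `ℚ⟦q⟧`, for `k : ℤ` (for negative `k` this is the
power `(1 - q^n)^{|k|}`). -/
def dFac (n : ℕ) (k : ℤ) : PowerSeries ℚ :=
  if 0 ≤ k then ((1 - (X : PowerSeries ℚ) ^ n)⁻¹) ^ k.toNat
  else (1 - (X : PowerSeries ℚ) ^ n) ^ (-k).toNat

/-- Strictly increasing `a`-tuples `1 ≤ n₁ < n₂ < ⋯ < n_a ≤ N`. -/
def strictTuples (a N : ℕ) : Finset (Fin a → ℕ) :=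
  (Fintype.piFinset fun _ : Fin a => Finset.Icc 1 N).filter fun f => StrictMono f

/-- The coefficient `d_{a,k,r,s}(N)` of `q^N` in
`ℬ_{a,k,r,s}(q) = Σ_{1≤n₁<⋯<n_a} q^{r(n₁²+⋯+n_a²)+s(n₁+⋯+n_a)} / ∏_j (1-q^{n_j})^k`.
Since `r, s ≥ 1`, tuples containing an entry `> N` contribute `0` to the coefficient of `q^N`,
so the (q-adically convergent) infinite sum can be truncated to entries in `[1, N]`. -/
def Bcoeff (a : ℕ) (k : ℤ) (r s : ℕ) (N : ℕ) : ℚ :=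
  ∑ f ∈ strictTuples a N,
    PowerSeries.coeff N
      ((X : PowerSeries ℚ) ^ (r * (∑ j, (f j) ^ 2) + s * ∑ j, f j) * ∏ j, dFac (f j) k)

namespace PowerSeries

variable {A : Type*} [CommRing A]

theorem expand_rescale_binomialSeries_natCast {n : ℕ} (hn : n ≠ 0) (m : ℕ) :
    expand n hn (rescale (-1 : A) (binomialSeries A (m : ℤ))) = (1 - X ^ n) ^ m := by
  rw [binomialSeries_nat]
  simp [rescale_X, expand_X, sub_eq_add_neg]

theorem coeff_rescale_binomialSeries_neg (k : ℤ) (i : ℕ) :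
    coeff i (rescale (-1 : A) (binomialSeries A (-k))) = ((Ring.multichoose k i : ℤ) : A) := by
  rw [coeff_rescale, binomialSeries_coeff, Ring.choose_neg', zsmul_eq_mul, mul_one, Units.smul_def,
    smul_eq_mul, Int.cast_mul, ← mul_assoc, Int.cast_negOnePow_natCast, ← mul_pow]
  simp

end PowerSeries

theorem Ring.multichoose_intCast_eq_eval {K : Type*} [Field K] [CharZero K] (k : ℤ) (i : ℕ) :
    ((Ring.multichoose k i : ℤ) : K) =
      (Polynomial.C (i.factorial : K)⁻¹ * ascPochhammer K i).eval (k : K) := by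
  have h := Ring.factorial_nsmul_multichoose_eq_ascPochhammer k i
  rw [Polynomial.ascPochhammer_smeval_eq_eval, nsmul_eq_mul] at h
  rw [Polynomial.eval_mul, Polynomial.eval_C, ← ascPochhammer_map (Int.castRingHom K),
    Polynomial.eval_intCast_map, Int.cast_id, ← h]
  simp [Nat.factorial_ne_zero]

theorem dFac_eq_expand_rescale_binomialSeries {n : ℕ} (hn : n ≠ 0) (k : ℤ) :
    dFac n k = expand n hn (rescale (-1 : ℚ) (binomialSeries ℚ (-k))) := by
  rcases le_or_gt 0 k with hk | hk
  · obtain ⟨m, rfl⟩ := Int.eq_ofNat_of_zero_le hk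
    rw [dFac, if_pos hk, Int.toNat_natCast]
    have hunit : constantCoeff (1 - X ^ n : ℚ⟦X⟧) ≠ 0 := by simp [zero_pow hn]
    have hinv := congrArg (expand n hn ∘ rescale (-1 : ℚ))
      (binomialSeries_add (A := ℚ) (-(m : ℤ)) m)
    simp only [Function.comp_apply, neg_add_cancel, binomialSeries_zero, map_mul, map_one,
      expand_rescale_binomialSeries_natCast] at hinv
    refine (left_inv_eq_right_inv hinv.symm ?_).symm
    rw [← mul_pow, PowerSeries.mul_inv_cancel _ hunit, one_pow]
  · obtain ⟨m, rfl⟩ := Int.exists_eq_neg_ofNat hk.le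
    rw [dFac, if_neg (by omega), neg_neg, Int.toNat_natCast, expand_rescale_binomialSeries_natCast]

def HasPolyCoeffs {R : Type*} [CommRing R] (F : ℤ → R⟦X⟧) : Prop :=
  ∀ c : ℕ, ∃ D : Polynomial R, D.natDegree ≤ c ∧ ∀ k : ℤ, coeff c (F k) = D.eval (k : R)

namespace HasPolyCoeffs

variable {R : Type*} [CommRing R]

theorem const (φ : R⟦X⟧) : HasPolyCoeffs fun _ => φ :=
  fun c => ⟨Polynomial.C (coeff c φ), by simp, fun _ => by simp⟩

theorem mul {F G : ℤ → R⟦X⟧} (hF : HasPolyCoeffs F) (hG : HasPolyCoeffs G) :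
    HasPolyCoeffs (F * G) := by
  choose DF hFdeg hFeval using hF
  choose DG hGdeg hGeval using hG
  refine fun c => ⟨∑ p ∈ antidiagonal c, DF p.1 * DG p.2, ?_, fun k => ?_⟩
  · refine Polynomial.natDegree_sum_le_of_forall_le _ _ fun p hp => ?_
    rw [← mem_antidiagonal.mp hp]
    exact Polynomial.natDegree_mul_le.trans (add_le_add (hFdeg p.1) (hGdeg p.2))
  · simp [coeff_mul, Polynomial.eval_finsetSum, hFeval, hGeval]

theorem prod {ι : Type*} (s : Finset ι) {F : ι → ℤ → R⟦X⟧} (hF : ∀ i ∈ s, HasPolyCoeffs (F i)) :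
    HasPolyCoeffs fun k => ∏ i ∈ s, F i k := by
  simp_rw [← Finset.prod_apply]
  exact Finset.prod_induction F HasPolyCoeffs (fun _ _ => mul) (const 1) hF

theorem expand {F : ℤ → R⟦X⟧} (hF : HasPolyCoeffs F) {n : ℕ} (hn : n ≠ 0) :
    HasPolyCoeffs fun k => expand n hn (F k) := by
  intro c
  obtain ⟨D, hDdeg, hDeval⟩ := hF (c / n)
  refine ⟨if n ∣ c then D else 0, ?_, fun k => ?_⟩
  · split_ifs
    · exact hDdeg.trans (Nat.div_le_self c n)
    · simp
  · rw [coeff_expand]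
    split_ifs
    · exact hDeval k
    · simp

end HasPolyCoeffs

theorem hasPolyCoeffs_rescale_binomialSeries_neg (K : Type*) [Field K] [CharZero K] :
    HasPolyCoeffs fun k => rescale (-1 : K) (binomialSeries K (-k)) := by
  refine fun i => ⟨Polynomial.C (i.factorial : K)⁻¹ * ascPochhammer K i, ?_, fun k => ?_⟩
  · exact Polynomial.natDegree_C_mul_le _ _ |>.trans (ascPochhammer_natDegree K i).le
  · rw [coeff_rescale_binomialSeries_neg, Ring.multichoose_intCast_eq_eval]

theorem hasPolyCoeffs_dFac {n : ℕ} (hn : n ≠ 0) : HasPolyCoeffs (dFac n) := by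
  have h := (hasPolyCoeffs_rescale_binomialSeries_neg ℚ).expand hn
  rwa [← funext (dFac_eq_expand_rescale_binomialSeries hn)] at h

theorem exists_coeff_prod_dFac_eq_eval (a : ℕ) :
    ∃ D : (Fin a → ℕ) → ℕ → Polynomial ℚ, ∀ f ℓ, (D f ℓ).natDegree ≤ ℓ ∧
      ((∀ j, f j ≠ 0) → ∀ k : ℤ, coeff ℓ (∏ j, dFac (f j) k) = (D f ℓ).eval (k : ℚ)) := by
  suffices ∀ (f : Fin a → ℕ) ℓ, ∃ D : Polynomial ℚ, D.natDegree ≤ ℓ ∧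
      ((∀ j, f j ≠ 0) → ∀ k : ℤ, coeff ℓ (∏ j, dFac (f j) k) = D.eval (k : ℚ)) by
    choose D hD using this
    exact ⟨D, hD⟩
  intro f ℓ
  by_cases hf : ∀ j, f j ≠ 0
  · obtain ⟨D, hDdeg, hDeval⟩ :=
      HasPolyCoeffs.prod univ (fun j _ => hasPolyCoeffs_dFac (hf j)) ℓ
    exact ⟨D, hDdeg, fun _ => hDeval⟩
  · exact ⟨0, by simp, fun h => absurd h hf⟩

theorem mem_strictTuples {a N : ℕ} {f : Fin a → ℕ} :
    f ∈ strictTuples a N ↔ (∀ j, f j ∈ Icc 1 N) ∧ StrictMono f := by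
  simp [strictTuples]

theorem mem_strictTuples_of_sum_le {a M N : ℕ} {f : Fin a → ℕ} (hf : f ∈ strictTuples a M)
    (hsum : ∑ j, f j ≤ N) : f ∈ strictTuples a N := by
  rw [mem_strictTuples] at hf ⊢
  refine ⟨fun j => mem_Icc.mpr ⟨(mem_Icc.mp (hf.1 j)).1, ?_⟩, hf.2⟩
  exact (single_le_sum (fun i _ => Nat.zero_le (f i)) (mem_univ j)).trans hsum

theorem pos_of_mem_strictTuples {a N : ℕ} {f : Fin a → ℕ} (hf : f ∈ strictTuples a N) (j : Fin a) :
    0 < f j :=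
  (mem_Icc.mp ((mem_strictTuples.mp hf).1 j)).1

theorem val_lt_of_strictMono {a : ℕ} {f : Fin a → ℕ} (hpos : ∀ j, 0 < f j) (hf : StrictMono f)
    (j : Fin a) : (j : ℕ) < f j := by
  obtain ⟨j, hj⟩ := j
  induction j with
  | zero => exact hpos _
  | succ j ih => exact Nat.lt_of_le_of_lt (ih (by omega)) (hf (Fin.mk_lt_mk.mpr j.lt_succ_self))

theorem triangle_le_sum_of_strictMono {a : ℕ} {f : Fin a → ℕ} (hpos : ∀ j, 0 < f j)
    (hf : StrictMono f) : a * (a + 1) / 2 ≤ ∑ j, f j :=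
  calc a * (a + 1) / 2 = ∑ i ∈ range (a + 1), i := by rw [sum_range_id, mul_comm]; rfl
    _ = ∑ j : Fin a, ((j : ℕ) + 1) := by
      rw [sum_range_succ', Fin.sum_univ_eq_sum_range (· + 1), add_zero]
    _ ≤ ∑ j, f j := sum_le_sum fun j _ => val_lt_of_strictMono hpos hf j

theorem Bcoeff_eq_sum_coeff_prod_dFac (a : ℕ) (k : ℤ) (r s N : ℕ) :
    Bcoeff a k r s N = ∑ f ∈ strictTuples a N with r * ∑ j, f j ^ 2 + s * ∑ j, f j ≤ N,
      coeff (N - (r * ∑ j, f j ^ 2 + s * ∑ j, f j)) (∏ j, dFac (f j) k) := by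
  rw [Bcoeff, sum_filter]
  exact sum_congr rfl fun f _ => coeff_X_pow_mul' _ _ _

def admissibleTriples (a r s N : ℕ) : Finset (ℕ × ℕ × ℕ) :=
  (range (N + 1) ×ˢ range (N + 1) ×ˢ range (N + 1)).filter
    (fun t => a * (a + 1) / 2 ≤ t.2.2 ∧ t.2.2 ^ 2 ≤ a * t.2.1 ∧ t.2.1 ≤ t.2.2 ^ 2 ∧
      t.2.1 * r + t.2.2 * s + t.1 = N)

theorem shape_mem_admissibleTriples {a r s N : ℕ} (hr : 1 ≤ r) (hs : 1 ≤ s) {f : Fin a → ℕ}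
    (hf : f ∈ strictTuples a N) (hweight : r * ∑ j, f j ^ 2 + s * ∑ j, f j ≤ N) :
    (N - (r * ∑ j, f j ^ 2 + s * ∑ j, f j), ∑ j, f j ^ 2, ∑ j, f j) ∈
      admissibleTriples a r s N := by
  have hsq : ∑ j, f j ^ 2 ≤ r * ∑ j, f j ^ 2 := Nat.le_mul_of_pos_left _ hr
  have hsum : ∑ j, f j ≤ s * ∑ j, f j := Nat.le_mul_of_pos_left _ hs
  simp only [admissibleTriples, mem_filter, mem_product, mem_range]
  refine ⟨⟨by omega, by omega, by omega⟩,
    triangle_le_sum_of_strictMono (pos_of_mem_strictTuples hf) (mem_strictTuples.mp hf).2, ?_,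
    sum_sq_le_sq_sum_of_nonneg fun _ _ => Nat.zero_le _, ?_⟩
  · simpa using sq_sum_le_card_mul_sum_sq (s := univ) (f := f)
  · rw [mul_comm _ r, mul_comm _ s]
    omega

theorem sum_strictTuples_eq_sum_admissibleTriples {a r s N : ℕ} (hr : 1 ≤ r) (hs : 1 ≤ s)
    {M : Type*} [AddCommMonoid M] (g : (Fin a → ℕ) → ℕ → M) :
    ∑ f ∈ strictTuples a N with r * ∑ j, f j ^ 2 + s * ∑ j, f j ≤ N,
        g f (N - (r * ∑ j, f j ^ 2 + s * ∑ j, f j)) =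
      ∑ t ∈ admissibleTriples a r s N,
        ∑ f ∈ strictTuples a t.2.2 with ∑ j, f j ^ 2 = t.2.1 ∧ ∑ j, f j = t.2.2, g f t.1 := by
  rw [← sum_fiberwise_of_maps_to fun f hf =>
    shape_mem_admissibleTriples hr hs (mem_filter.mp hf).1 (mem_filter.mp hf).2]
  refine sum_congr rfl fun ⟨ℓ, m, n⟩ ht => ?_
  simp only [admissibleTriples, mem_filter, mem_product, mem_range] at ht
  obtain ⟨⟨-, -, hn⟩, -, -, -, hN⟩ := ht
  refine sum_congr ?_ fun f hf => ?_
  · ext f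
    simp only [mem_filter, Prod.mk.injEq]
    constructor
    · rintro ⟨⟨hf, -⟩, -, hm, hn'⟩
      exact ⟨mem_strictTuples_of_sum_le hf hn'.le, hm, hn'⟩
    · rintro ⟨hf, hm, hn'⟩
      rw [hm, hn', mul_comm r, mul_comm s]
      exact ⟨⟨mem_strictTuples_of_sum_le hf (by omega), by omega⟩, by omega, rfl, rfl⟩
  · obtain ⟨-, hm, hn'⟩ := mem_filter.mp hf
    rw [hm, hn', mul_comm r, mul_comm s, ← hN, Nat.add_sub_cancel_left]

theorem B_coeff_polynomial_family_general (a : ℕ) :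
    ∃ P : ℕ → ℕ → ℕ → Polynomial ℚ,
      (∀ ℓ m n : ℕ, (P ℓ m n).degree ≤ (ℓ : ℕ)) ∧
      ∀ (k : ℤ) (r s : ℕ), 1 ≤ r → 1 ≤ s → ∀ N : ℕ,
        Bcoeff a k r s N =
          ∑ t ∈ (Finset.range (N + 1) ×ˢ Finset.range (N + 1) ×ˢ Finset.range (N + 1)).filter
              (fun t => a * (a + 1) / 2 ≤ t.2.2 ∧ t.2.2 ^ 2 ≤ a * t.2.1 ∧ t.2.1 ≤ t.2.2 ^ 2 ∧
                t.2.1 * r + t.2.2 * s + t.1 = N),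
            (P t.1 t.2.1 t.2.2).eval (k : ℚ) := by
  obtain ⟨D, hD⟩ := exists_coeff_prod_dFac_eq_eval a
  refine ⟨fun ℓ m n => ∑ f ∈ strictTuples a n with ∑ j, f j ^ 2 = m ∧ ∑ j, f j = n, D f ℓ,
    fun ℓ m n => ?_, fun k r s hr hs N => ?_⟩
  · exact Polynomial.natDegree_le_iff_degree_le.mp
      (Polynomial.natDegree_sum_le_of_forall_le _ _ fun f _ => (hD f ℓ).1)
  · have hcoeff : ∀ f ∈ strictTuples a N, ∀ ℓ,
        coeff ℓ (∏ j, dFac (f j) k) = (D f ℓ).eval (k : ℚ) := fun f hf ℓ =>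
      (hD f ℓ).2 (fun j => (pos_of_mem_strictTuples hf j).ne') k
    simp only [Polynomial.eval_finsetSum]
    rw [Bcoeff_eq_sum_coeff_prod_dFac]
    exact (sum_congr rfl fun f hf => hcoeff f (mem_filter.mp hf).1 _).trans
      (sum_strictTuples_eq_sum_admissibleTriples hr hs fun f ℓ => (D f ℓ).eval (k : ℚ))

/-- Theorem 1.3, `ℬ`-part.  For `a ∈ ℕ` (positive) there exist polynomials
`P_{a,ℓ,m,n}`, indexed by `ℓ ≥ 0`, `n ≥ a(a+1)/2` and `n²/a ≤ m ≤ n²`, each of degree at most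
`ℓ`, such that for all `k ∈ ℤ`, `r, s ∈ ℕ` (positive) and `N ∈ ℕ₀` one has
`d_{a,k,r,s}(N) = Σ_{(ℓ,m,n) : n ≥ a(a+1)/2, n²/a ≤ m ≤ n², mr+ns+ℓ = N} P_{a,ℓ,m,n}(k)`.
(The condition `n²/a ≤ m` is phrased as `n² ≤ a·m`.) -/
theorem B_coeff_polynomial_family (a : ℕ) (ha : 1 ≤ a) :
    ∃ P : ℕ → ℕ → ℕ → Polynomial ℚ,
      (∀ ℓ m n : ℕ, (P ℓ m n).degree ≤ (ℓ : ℕ)) ∧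
      ∀ (k : ℤ) (r s : ℕ), 1 ≤ r → 1 ≤ s → ∀ N : ℕ,
        Bcoeff a k r s N =
          ∑ t ∈ (Finset.range (N + 1) ×ˢ Finset.range (N + 1) ×ˢ Finset.range (N + 1)).filter
              (fun t => a * (a + 1) / 2 ≤ t.2.2 ∧ t.2.2 ^ 2 ≤ a * t.2.1 ∧ t.2.1 ≤ t.2.2 ^ 2 ∧
                t.2.1 * r + t.2.2 * s + t.1 = N),
            (P t.1 t.2.1 t.2.2).eval (k : ℚ) :=
  B_coeff_polynomial_family_general a
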